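/- arXiv:2012.12830 — 2 statements merged into one kernel-verified Lean document; each statement's English description precedes it below -/
import Mathlib

section
/- Scaling invariance of weighted probabilistic team semantics: for every formula ψ of FO(≈) (first-order logic in negation normal form extended with marginal identity atoms), every finite structure 𝔄, every weighted team 𝕏, and every real r > 0: 𝔄 ⊨^w_𝕏 ψ if and only if 𝔄 ⊨^w_{r𝕏} ψ, where r𝕏 is the weighted team with (r𝕏)(s) = r·𝕏(s). -/
namespace PTS

/-- Syntax of first-order logic (in negation normal form) over a relational
vocabulary `τ` with arities `arR`, extended with marginal identity atoms,
dependence atoms, probabilistic (marginal) independence atoms and inclusion atoms.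
Variables come from the type `V`. -/
inductive PFormula (V : Type) (τ : Type) (arR : τ → ℕ) : Type
  | eq    (x y : V)
  | neq   (x y : V)
  | rel   (R : τ) (ts : Fin (arR R) → V)
  | nrel  (R : τ) (ts : Fin (arR R) → V)
  | marg  (n : ℕ) (xs ys : Fin n → V)
  | dep   (n : ℕ) (xs : Fin n → V) (y : V)
  | indep (m n : ℕ) (xs : Fin m → V) (ys : Fin n → V)
  | incl  (n : ℕ) (xs ys : Fin n → V)
  | and   (φ ψ : PFormula V τ arR)
  | or    (φ ψ : PFormula V τ arR)
  | ex    (x : V) (φ : PFormula V τ arR)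
  | all   (x : V) (φ : PFormula V τ arR)

namespace PFormula

variable {V W τ : Type} {arR : τ → ℕ}

/-- No dependence atoms occur. -/
def noDep : PFormula V τ arR → Prop
  | .dep _ _ _ => False
  | .and φ ψ => noDep φ ∧ noDep ψ
  | .or φ ψ => noDep φ ∧ noDep ψ
  | .ex _ φ => noDep φ
  | .all _ φ => noDep φ
  | _ => True

/-- No probabilistic independence atoms occur. -/
def noIndep : PFormula V τ arR → Prop
  | .indep _ _ _ _ => False
  | .and φ ψ => noIndep φ ∧ noIndep ψ
  | .or φ ψ => noIndep φ ∧ noIndep ψ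
  | .ex _ φ => noIndep φ
  | .all _ φ => noIndep φ
  | _ => True

/-- No inclusion atoms occur. -/
def noIncl : PFormula V τ arR → Prop
  | .incl _ _ _ => False
  | .and φ ψ => noIncl φ ∧ noIncl ψ
  | .or φ ψ => noIncl φ ∧ noIncl ψ
  | .ex _ φ => noIncl φ
  | .all _ φ => noIncl φ
  | _ => True

/-- No marginal identity atoms occur. -/
def noMarg : PFormula V τ arR → Prop
  | .marg _ _ _ => False
  | .and φ ψ => noMarg φ ∧ noMarg ψ
  | .or φ ψ => noMarg φ ∧ noMarg ψ
  | .ex _ φ => noMarg φ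
  | .all _ φ => noMarg φ
  | _ => True

/-- Purely first-order formula (no team atoms at all). -/
def isFO (φ : PFormula V τ arR) : Prop := noDep φ ∧ noIndep φ ∧ noIncl φ ∧ noMarg φ

/-- A formula of probabilistic inclusion logic FO(≈). -/
def isFOmarg (φ : PFormula V τ arR) : Prop := noDep φ ∧ noIndep φ ∧ noIncl φ

/-- A formula of FO(≈, dep(⋯)). -/
def isFOmargdep (φ : PFormula V τ arR) : Prop := noIndep φ ∧ noIncl φ

/-- A formula of inclusion logic FO(⊆). -/
def isFOincl (φ : PFormula V τ arR) : Prop := noDep φ ∧ noIndep φ ∧ noMarg φ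

/-- Free variables of a formula. -/
def freeVars : PFormula V τ arR → Set V
  | .eq x y => {x, y}
  | .neq x y => {x, y}
  | .rel _ ts => Set.range ts
  | .nrel _ ts => Set.range ts
  | .marg _ xs ys => Set.range xs ∪ Set.range ys
  | .dep _ xs y => Set.range xs ∪ {y}
  | .indep _ _ xs ys => Set.range xs ∪ Set.range ys
  | .incl _ xs ys => Set.range xs ∪ Set.range ys
  | .and φ ψ => freeVars φ ∪ freeVars ψ
  | .or φ ψ => freeVars φ ∪ freeVars ψ
  | .ex x φ => freeVars φ \ {x}
  | .all x φ => freeVars φ \ {x}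

/-- Renaming of variables. -/
def rename (f : V → W) : PFormula V τ arR → PFormula W τ arR
  | .eq x y => .eq (f x) (f y)
  | .neq x y => .neq (f x) (f y)
  | .rel R ts => .rel R (fun i => f (ts i))
  | .nrel R ts => .nrel R (fun i => f (ts i))
  | .marg n xs ys => .marg n (fun i => f (xs i)) (fun i => f (ys i))
  | .dep n xs y => .dep n (fun i => f (xs i)) (f y)
  | .indep m n xs ys => .indep m n (fun i => f (xs i)) (fun i => f (ys i))
  | .incl n xs ys => .incl n (fun i => f (xs i)) (fun i => f (ys i))
  | .and φ ψ => .and (rename f φ) (rename f ψ)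
  | .or φ ψ => .or (rename f φ) (rename f ψ)
  | .ex x φ => .ex (f x) (rename f φ)
  | .all x φ => .all (f x) (rename f φ)

end PFormula

section Semantics

variable {V τ : Type} {arR : τ → ℕ} {A : Type}
variable [Fintype V] [DecidableEq V] [Fintype A] [DecidableEq A]

/-- A weighted team: all weights are nonnegative. -/
def NonnegTeam (X : (V → A) → ℝ) : Prop := ∀ s, 0 ≤ X s

/-- Total weight |X| of a weighted team. -/
noncomputable def totalW (X : (V → A) → ℝ) : ℝ := ∑ s, X s

/-- A probabilistic team: a probability distribution on assignments. -/
def IsDist (X : (V → A) → ℝ) : Prop := NonnegTeam X ∧ totalW X = 1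

/-- The marginal weight |X_{x⃗ = a⃗}|. -/
noncomputable def margW (X : (V → A) → ℝ) {n : ℕ} (xs : Fin n → V) (a : Fin n → A) : ℝ :=
  ∑ s : V → A, if (fun i => s (xs i)) = a then X s else 0

/-- The duplicated team X[A/x]: the weight of each assignment is redistributed
uniformly over all values of `x`. -/
noncomputable def dup (x : V) (X : (V → A) → ℝ) : (V → A) → ℝ :=
  fun s => (∑ a : A, X (Function.update s x a)) / (Fintype.card A : ℝ)

/-- `Y` is obtained from `X` by (re)distributing the values of the variable `x`:
the marginals of `X` and `Y` on the variables other than `x` coincide. -/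
def ExtAt (x : V) (X Y : (V → A) → ℝ) : Prop :=
  ∀ s : V → A, (∑ a : A, Y (Function.update s x a)) = ∑ a : A, X (Function.update s x a)

variable (I : ∀ R : τ, (Fin (arR R) → A) → Prop)

/-- Tarski semantics for first-order formulas (team atoms are vacuously true;
they do not occur in first-order formulas). -/
def foSat : PFormula V τ arR → (V → A) → Prop
  | .eq x y, s => s x = s y
  | .neq x y, s => s x ≠ s y
  | .rel R ts, s => I R (fun i => s (ts i))
  | .nrel R ts, s => ¬ I R (fun i => s (ts i))
  | .and φ ψ, s => foSat φ s ∧ foSat ψ s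
  | .or φ ψ, s => foSat φ s ∨ foSat ψ s
  | .ex x φ, s => ∃ a : A, foSat φ (Function.update s x a)
  | .all x φ, s => ∀ a : A, foSat φ (Function.update s x a)
  | _, _ => True

/-- Weighted (probabilistic) team semantics `⊨ʷ`. -/
def wSat : PFormula V τ arR → ((V → A) → ℝ) → Prop
  | .eq x y, X => ∀ s, 0 < X s → s x = s y
  | .neq x y, X => ∀ s, 0 < X s → s x ≠ s y
  | .rel R ts, X => ∀ s, 0 < X s → I R (fun i => s (ts i))
  | .nrel R ts, X => ∀ s, 0 < X s → ¬ I R (fun i => s (ts i))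
  | .marg n xs ys, X => ∀ a : Fin n → A, margW X xs a = margW X ys a
  | .dep _ xs y, X => ∀ s t, 0 < X s → 0 < X t → (∀ i, s (xs i) = t (xs i)) → s y = t y
  | .indep m n xs ys, X => ∀ (a : Fin m → A) (b : Fin n → A),
      (∑ s : V → A, if ((fun i => s (xs i)) = a ∧ (fun i => s (ys i)) = b) then X s else 0)
          * totalW X = margW X xs a * margW X ys b
  | .incl _ xs ys, X => ∀ s, 0 < X s → ∃ t, 0 < X t ∧ ∀ i, s (xs i) = t (ys i)
  | .and φ ψ, X => wSat φ X ∧ wSat ψ X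
  | .or φ ψ, X => ∃ Y Z : (V → A) → ℝ, NonnegTeam Y ∧ NonnegTeam Z ∧
      (∀ s, Y s + Z s = X s) ∧ wSat φ Y ∧ wSat ψ Z
  | .ex x φ, X => ∃ Y : (V → A) → ℝ, NonnegTeam Y ∧ ExtAt x X Y ∧ wSat φ Y
  | .all x φ, X => wSat φ (dup x X)

/-- Probabilistic team semantics `⊨` (on probability distributions). -/
def pSat : PFormula V τ arR → ((V → A) → ℝ) → Prop
  | .eq x y, X => ∀ s, 0 < X s → s x = s y
  | .neq x y, X => ∀ s, 0 < X s → s x ≠ s y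
  | .rel R ts, X => ∀ s, 0 < X s → I R (fun i => s (ts i))
  | .nrel R ts, X => ∀ s, 0 < X s → ¬ I R (fun i => s (ts i))
  | .marg n xs ys, X => ∀ a : Fin n → A, margW X xs a = margW X ys a
  | .dep _ xs y, X => ∀ s t, 0 < X s → 0 < X t → (∀ i, s (xs i) = t (xs i)) → s y = t y
  | .indep m n xs ys, X => ∀ (a : Fin m → A) (b : Fin n → A),
      (∑ s : V → A, if ((fun i => s (xs i)) = a ∧ (fun i => s (ys i)) = b) then X s else 0)
          = margW X xs a * margW X ys b
  | .incl _ xs ys, X => ∀ s, 0 < X s → ∃ t, 0 < X t ∧ ∀ i, s (xs i) = t (ys i)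
  | .and φ ψ, X => pSat φ X ∧ pSat ψ X
  | .or φ ψ, X => ∃ (α : ℝ) (Y Z : (V → A) → ℝ), 0 ≤ α ∧ α ≤ 1 ∧ IsDist Y ∧ IsDist Z ∧
      (∀ s, α * Y s + (1 - α) * Z s = X s) ∧ pSat φ Y ∧ pSat ψ Z
  | .ex x φ, X => ∃ Y : (V → A) → ℝ, IsDist Y ∧ ExtAt x X Y ∧ pSat φ Y
  | .all x φ, X => pSat φ (dup x X)

/-- Relational team semantics (for inclusion logic and other team-based logics). -/
def tSat : PFormula V τ arR → Set (V → A) → Prop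
  | .eq x y, X => ∀ s ∈ X, s x = s y
  | .neq x y, X => ∀ s ∈ X, s x ≠ s y
  | .rel R ts, X => ∀ s ∈ X, I R (fun i => s (ts i))
  | .nrel R ts, X => ∀ s ∈ X, ¬ I R (fun i => s (ts i))
  | .marg _ _ _, _ => True
  | .dep _ xs y, X => ∀ s ∈ X, ∀ t ∈ X, (∀ i, s (xs i) = t (xs i)) → s y = t y
  | .indep _ _ _ _, _ => True
  | .incl _ xs ys, X => ∀ s ∈ X, ∃ t ∈ X, ∀ i, s (xs i) = t (ys i)
  | .and φ ψ, X => tSat φ X ∧ tSat ψ X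
  | .or φ ψ, X => ∃ Y Z : Set (V → A), Y ∪ Z = X ∧ tSat φ Y ∧ tSat ψ Z
  | .ex x φ, X => ∃ F : (V → A) → Set A, (∀ s ∈ X, (F s).Nonempty) ∧
      tSat φ {t | ∃ s ∈ X, ∃ a ∈ F s, t = Function.update s x a}
  | .all x φ, X => tSat φ {t | ∃ s ∈ X, ∃ a : A, t = Function.update s x a}

end Semantics

/-- Marginal (projection) of a weighted team along an injection of variable domains. -/
noncomputable def marginal {W V A : Type} [Fintype V] [DecidableEq V] [Fintype A]
    [Fintype W] [DecidableEq W] [DecidableEq A] (ι : W → V) (X : (V → A) → ℝ) : (W → A) → ℝ :=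
  fun t => ∑ s : V → A, if (fun w => s (ι w)) = t then X s else 0

/-- The canonical (uniform) lift of a weight function on the values of a tuple `xs` of
variables to a weighted team over all assignments. -/
noncomputable def lift {V A : Type} [Fintype V] [DecidableEq V] [Fintype A] {n : ℕ}
    (xs : Fin n → V) (f : (Fin n → A) → ℝ) : (V → A) → ℝ :=
  fun s => f (fun i => s (xs i)) * (Fintype.card A : ℝ) ^ n / (Fintype.card (V → A) : ℝ)

end PTS

namespace PTS

lemma wSat_smul_of_wSat
    {V τ : Type} [Fintype V] [DecidableEq V] {arR : τ → ℕ}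
    {A : Type} [Fintype A] [DecidableEq A]
    (I : ∀ R : τ, (Fin (arR R) → A) → Prop)
    (φ : PFormula V τ arR) (hφ : φ.isFOmarg)
    (r : ℝ) (hr : 0 < r) :
    ∀ X : (V → A) → ℝ, wSat I φ X → wSat I φ (fun s => r * X s) := by
  induction φ with
  | eq x y =>
    intro X h s hs
    exact h s ((mul_pos_iff_of_pos_left hr).mp hs)
  | neq x y =>
    intro X h s hs
    exact h s ((mul_pos_iff_of_pos_left hr).mp hs)
  | rel R ts =>
    intro X h s hs
    exact h s ((mul_pos_iff_of_pos_left hr).mp hs)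
  | nrel R ts =>
    intro X h s hs
    exact h s ((mul_pos_iff_of_pos_left hr).mp hs)
  | marg n xs ys =>
    intro X h a
    have hm : ∀ (zs : Fin n → V), margW (fun s => r * X s) zs a = r * margW X zs a := by
      intro zs
      simp [margW, Finset.mul_sum, mul_ite]
    rw [hm, hm, h a]
  | dep n xs y => exact absurd hφ.1 id
  | indep m n xs ys => exact absurd hφ.2.1 id
  | incl n xs ys => exact absurd hφ.2.2 id
  | and φ ψ ihφ ihψ =>
    intro X h
    exact ⟨ihφ ⟨hφ.1.1, hφ.2.1.1, hφ.2.2.1⟩ X h.1, ihψ ⟨hφ.1.2, hφ.2.1.2, hφ.2.2.2⟩ X h.2⟩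
  | or φ ψ ihφ ihψ =>
    intro X h
    obtain ⟨Y, Z, hY, hZ, hsum, h1, h2⟩ := h
    refine ⟨fun s => r * Y s, fun s => r * Z s,
      fun s => mul_nonneg hr.le (hY s), fun s => mul_nonneg hr.le (hZ s),
      fun s => by show r * Y s + r * Z s = r * X s; rw [← hsum s]; ring,
      ihφ ⟨hφ.1.1, hφ.2.1.1, hφ.2.2.1⟩ Y h1, ihψ ⟨hφ.1.2, hφ.2.1.2, hφ.2.2.2⟩ Z h2⟩
  | ex x φ ih =>
    intro X h
    obtain ⟨Y, hY, hext, h1⟩ := h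
    exact ⟨fun s => r * Y s, fun s => mul_nonneg hr.le (hY s),
      fun s => by simp only [← Finset.mul_sum, hext s],
      ih hφ Y h1⟩
  | all x φ ih =>
    intro X h
    have hd : dup x (fun s => r * X s) = fun s => r * dup x X s := by
      funext s
      simp [dup, ← Finset.mul_sum, mul_div_assoc]
    show wSat I φ (dup x (fun s => r * X s))
    rw [hd]
    exact ih hφ (dup x X) h

/-- **Scaling invariance of weighted probabilistic team semantics for FO(≈).**
For every formula `φ` of probabilistic inclusion logic, every finite structure,
every weighted team `X` and every real `r > 0`:
`𝔄 ⊨ʷ_X φ` iff `𝔄 ⊨ʷ_{r·X} φ`. -/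
theorem scaling_invariance
    (V τ : Type) [Fintype V] [DecidableEq V] (arR : τ → ℕ)
    (A : Type) [Fintype A] [DecidableEq A] (hA : 2 ≤ Fintype.card A)
    (I : ∀ R : τ, (Fin (arR R) → A) → Prop)
    (φ : PFormula V τ arR) (hφ : φ.isFOmarg)
    (X : (V → A) → ℝ) (hX : NonnegTeam X)
    (r : ℝ) (hr : 0 < r) :
    wSat I φ X ↔ wSat I φ (fun s => r * X s) := by
  constructor
  · exact wSat_smul_of_wSat I φ hφ r hr X
  · intro h
    have h2 := wSat_smul_of_wSat I φ hφ r⁻¹ (inv_pos.mpr hr) _ h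
    have : (fun s => r⁻¹ * (r * X s)) = X := by
      funext s; field_simp
    rwa [this] at h2

end PTS
end

section
/- Locality: for every formula ψ of FO(≈), every finite structure 𝔄, every weighted team 𝕏, and every set of variables V with Fr(ψ) ⊆ V ⊆ Dom(𝕏): 𝔄 ⊨^w_𝕏 ψ if and only if 𝔄 ⊨^w_{𝕏↾V} ψ, where 𝕏↾V is the marginal of 𝕏 on V, defined by (𝕏↾V)(t) = Σ{𝕏(s) : s ∈ X, s↾V = t}. -/
/-!
Locality is proved by induction on `ψ`, simultaneously for all nonnegative teams. Atoms only see
the support or the marginals of a team, and both commute with restriction. A split (for `∨`) or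
an extension (for `∃`) of the marginal lifts back to `X` by rescaling `X` on each fibre of the
restriction map (`reweight`). Quantifiers rest on the identity
`marginal ι (sumUpdate (ι x) F) = sumUpdate x (marginal ι F)`: marginalisation is adjoint to
precomposition with `ι`, summing over the values of one variable is self-adjoint, and
precomposition with an injective `ι` intertwines the two fibre sums.
-/

namespace PTS

open Function Finset

lemma funext_of_sum_mul {α : Type} [Fintype α] [DecidableEq α] {f₁ f₂ : α → ℝ}
    (h : ∀ g : α → ℝ, ∑ t, g t * f₁ t = ∑ t, g t * f₂ t) : f₁ = f₂ :=
  funext fun t => by simpa using h (fun t' => if t' = t then 1 else 0)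

section SumUpdate

variable {V A : Type} [DecidableEq V] [Fintype A]

-- `dup v X = sumUpdate v X / |A|`, and `ExtAt v X Y` says `sumUpdate v Y = sumUpdate v X`.
noncomputable def sumUpdate (v : V) (F : (V → A) → ℝ) : (V → A) → ℝ :=
  fun s => ∑ a, F (update s v a)

lemma sumUpdate_update (v : V) (F : (V → A) → ℝ) (s : V → A) (a : A) :
    sumUpdate v F (update s v a) = sumUpdate v F s := by
  simp only [sumUpdate, update_idem]

lemma sumUpdate_nonneg (v : V) {F : (V → A) → ℝ} (hF : NonnegTeam F) :
    NonnegTeam (sumUpdate v F) :=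
  fun _ => sum_nonneg fun _ _ => hF _

lemma le_sumUpdate (v : V) {F : (V → A) → ℝ} (hF : NonnegTeam F) (s : V → A) :
    F s ≤ sumUpdate v F s := by
  simpa [sumUpdate] using
    single_le_sum (f := fun a => F (update s v a)) (fun _ _ => hF _) (mem_univ (s v))

-- `(s, a) ↦ (update s v a, s v)` is an involution of `(V → A) × A`.
lemma sum_mul_sumUpdate_comm [Fintype V] (v : V) (g h : (V → A) → ℝ) :
    ∑ s, g s * sumUpdate v h s = ∑ s, sumUpdate v g s * h s := by
  have hinv : Involutive fun p : (V → A) × A => (update p.1 v p.2, p.1 v) := fun p => by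
    simp
  simp only [sumUpdate, mul_sum, sum_mul, ← Fintype.sum_prod_type']
  rw [← Equiv.sum_comp hinv.toPerm]
  simp

lemma dup_nonneg (v : V) {X : (V → A) → ℝ} (hX : NonnegTeam X) : NonnegTeam (dup v X) :=
  fun s => div_nonneg (sumUpdate_nonneg v hX s) (Nat.cast_nonneg _)

lemma extAt_iff_sumUpdate_eq (x : V) (X Y : (V → A) → ℝ) :
    ExtAt x X Y ↔ sumUpdate x Y = sumUpdate x X :=
  funext_iff.symm

lemma sumUpdate_restrict {W : Type} [DecidableEq W] {ι : W → V} (hι : Injective ι) (x : W)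
    (g : (W → A) → ℝ) (s : V → A) :
    sumUpdate (ι x) (fun s' => g (fun w => s' (ι w))) s = sumUpdate x g (fun w => s (ι w)) := by
  simp only [sumUpdate, update_comp_eq_of_injective' s hι]

end SumUpdate

section Marginal

variable {W V A : Type} [Fintype W] [DecidableEq W] [Fintype V] [DecidableEq V]
  [Fintype A] [DecidableEq A]

lemma sum_mul_marginal (ι : W → V) (g : (W → A) → ℝ) (F : (V → A) → ℝ) :
    ∑ t, g t * marginal ι F t = ∑ s, g (fun w => s (ι w)) * F s := by
  simp only [marginal, mul_sum, mul_ite, mul_zero]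
  rw [sum_comm]
  simp

lemma marginal_marginal {U : Type} [Fintype U] [DecidableEq U] (κ : U → W) (ι : W → V)
    (X : (V → A) → ℝ) : marginal κ (marginal ι X) = marginal (fun u => ι (κ u)) X :=
  funext_of_sum_mul fun g => by simp only [sum_mul_marginal]

lemma margW_marginal (ι : W → V) (X : (V → A) → ℝ) {n : ℕ} (xs : Fin n → W) (a : Fin n → A) :
    margW (marginal ι X) xs a = margW X (fun i => ι (xs i)) a :=
  congrFun (marginal_marginal xs ι X) a

lemma marginal_add (ι : W → V) (Y Z : (V → A) → ℝ) :
    marginal ι (Y + Z) = marginal ι Y + marginal ι Z :=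
  funext_of_sum_mul fun g => by
    simp only [sum_mul_marginal, Pi.add_apply, mul_add, sum_add_distrib]

lemma marginal_div_const (ι : W → V) (F : (V → A) → ℝ) (c : ℝ) :
    marginal ι (fun s => F s / c) = fun t => marginal ι F t / c :=
  funext_of_sum_mul fun g => by simp only [sum_mul_marginal, mul_div_assoc', ← sum_div]

lemma marginal_nonneg (ι : W → V) {X : (V → A) → ℝ} (hX : NonnegTeam X) :
    NonnegTeam (marginal ι X) :=
  fun _ => sum_nonneg fun s _ => by split_ifs <;> simp [hX s]

lemma le_marginal (ι : W → V) {X : (V → A) → ℝ} (hX : NonnegTeam X) (s : V → A) :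
    X s ≤ marginal ι X (fun w => s (ι w)) := by
  simpa [marginal] using single_le_sum (f := fun s' : V → A =>
    if (fun w => s' (ι w)) = (fun w => s (ι w)) then X s' else 0)
    (fun s' _ => by split_ifs <;> simp [hX s']) (mem_univ s)

lemma marginal_pos_iff (ι : W → V) {X : (V → A) → ℝ} (hX : NonnegTeam X) (t : W → A) :
    0 < marginal ι X t ↔ ∃ s, (fun w => s (ι w)) = t ∧ 0 < X s := by
  rw [marginal, sum_pos_iff_of_nonneg (fun s _ => by split_ifs <;> simp [hX s])]
  simp only [mem_univ, true_and]
  refine exists_congr fun s => ?_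
  split_ifs <;> simp [*]

lemma forall_pos_marginal_iff (ι : W → V) {X : (V → A) → ℝ} (hX : NonnegTeam X)
    (P : (W → A) → Prop) :
    (∀ t, 0 < marginal ι X t → P t) ↔ ∀ s, 0 < X s → P (fun w => s (ι w)) := by
  simp only [marginal_pos_iff ι hX]
  exact ⟨fun h s hs => h _ ⟨s, rfl, hs⟩, fun h t ⟨s, hst, hs⟩ => hst ▸ h s hs⟩

lemma marginal_sumUpdate {ι : W → V} (hι : Injective ι) (x : W) (F : (V → A) → ℝ) :
    marginal ι (sumUpdate (ι x) F) = sumUpdate x (marginal ι F) :=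
  funext_of_sum_mul fun g => by
    rw [sum_mul_marginal, sum_mul_sumUpdate_comm, sum_mul_sumUpdate_comm, sum_mul_marginal]
    simp only [sumUpdate_restrict hι]

lemma marginal_dup {ι : W → V} (hι : Injective ι) (x : W) (X : (V → A) → ℝ) :
    marginal ι (dup (ι x) X) = dup x (marginal ι X) := by
  have h := marginal_div_const ι (sumUpdate (ι x) X) (Fintype.card A)
  rwa [marginal_sumUpdate hι] at h

lemma ExtAt.marginal {ι : W → V} (hι : Injective ι) {x : W} {X Y : (V → A) → ℝ}
    (h : ExtAt (ι x) X Y) : ExtAt x (marginal ι X) (marginal ι Y) := by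
  rw [extAt_iff_sumUpdate_eq] at h ⊢
  rw [← marginal_sumUpdate hι, ← marginal_sumUpdate hι, h]

noncomputable def reweight (ι : W → V) (X : (V → A) → ℝ) (Y' : (W → A) → ℝ) : (V → A) → ℝ :=
  fun s => X s * Y' (fun w => s (ι w)) / marginal ι X (fun w => s (ι w))

lemma reweight_nonneg (ι : W → V) {X : (V → A) → ℝ} {Y' : (W → A) → ℝ} (hX : NonnegTeam X)
    (hY' : NonnegTeam Y') : NonnegTeam (reweight ι X Y') :=
  fun _ => div_nonneg (mul_nonneg (hX _) (hY' _)) (marginal_nonneg ι hX _)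

lemma reweight_marginal (ι : W → V) {X : (V → A) → ℝ} (hX : NonnegTeam X) :
    reweight ι X (marginal ι X) = X := by
  funext s
  by_cases h : marginal ι X (fun w => s (ι w)) = 0
  · have hs : X s = 0 := le_antisymm (h ▸ le_marginal ι hX s) (hX s)
    simp [reweight, hs]
  · exact mul_div_cancel_right₀ _ h

lemma marginal_reweight (ι : W → V) {X : (V → A) → ℝ} {Y' : (W → A) → ℝ}
    (hY' : ∀ t, marginal ι X t = 0 → Y' t = 0) : marginal ι (reweight ι X Y') = Y' := by
  funext t
  have hfib : ∀ s, (if (fun w => s (ι w)) = t then reweight ι X Y' s else 0)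
      = (if (fun w => s (ι w)) = t then X s else 0) * (Y' t / marginal ι X t) := by
    intro s
    split_ifs with hs
    · rw [reweight, hs, mul_div_assoc]
    · rw [zero_mul]
  rw [marginal, sum_congr rfl fun s _ => hfib s, ← sum_mul, ← marginal]
  by_cases h : marginal ι X t = 0
  · simp [h, hY' t h]
  · field_simp

lemma sumUpdate_reweight {ι : W → V} (hι : Injective ι) (x : W) (X : (V → A) → ℝ)
    (Y' : (W → A) → ℝ) :
    sumUpdate (ι x) (reweight ι (sumUpdate (ι x) X) Y')
      = reweight ι (sumUpdate (ι x) X) (sumUpdate x Y') := by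
  funext s
  have hterm : ∀ a, reweight ι (sumUpdate (ι x) X) Y' (update s (ι x) a)
      = sumUpdate (ι x) X s * Y' (update (fun w => s (ι w)) x a)
        / marginal ι (sumUpdate (ι x) X) (fun w => s (ι w)) := by
    intro a
    rw [reweight, update_comp_eq_of_injective' s hι, sumUpdate_update, marginal_sumUpdate hι,
      sumUpdate_update]
  rw [sumUpdate, sum_congr rfl fun a _ => hterm a, ← sum_div, ← mul_sum]
  rfl

lemma exists_split_iff_of_marginal (ι : W → V) {X : (V → A) → ℝ} (hX : NonnegTeam X)
    {P Q : ((V → A) → ℝ) → Prop} {P' Q' : ((W → A) → ℝ) → Prop}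
    (hP : ∀ Y, NonnegTeam Y → (P Y ↔ P' (marginal ι Y)))
    (hQ : ∀ Z, NonnegTeam Z → (Q Z ↔ Q' (marginal ι Z))) :
    (∃ Y Z : (V → A) → ℝ, NonnegTeam Y ∧ NonnegTeam Z ∧ (∀ s, Y s + Z s = X s) ∧ P Y ∧ Q Z) ↔
      ∃ Y' Z' : (W → A) → ℝ, NonnegTeam Y' ∧ NonnegTeam Z' ∧
        (∀ t, Y' t + Z' t = marginal ι X t) ∧ P' Y' ∧ Q' Z' := by
  constructor
  · rintro ⟨Y, Z, hY, hZ, hsum, hPY, hQZ⟩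
    have hX_eq : X = Y + Z := funext fun s => (hsum s).symm
    refine ⟨marginal ι Y, marginal ι Z, marginal_nonneg ι hY, marginal_nonneg ι hZ,
      fun t => ?_, (hP Y hY).1 hPY, (hQ Z hZ).1 hQZ⟩
    rw [hX_eq, marginal_add]
    rfl
  · rintro ⟨Y', Z', hY', hZ', hsum, hPY', hQZ'⟩
    have hY'0 : ∀ t, marginal ι X t = 0 → Y' t = 0 := fun t h =>
      le_antisymm (by linarith [hsum t, hZ' t]) (hY' t)
    have hZ'0 : ∀ t, marginal ι X t = 0 → Z' t = 0 := fun t h =>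
      le_antisymm (by linarith [hsum t, hY' t]) (hZ' t)
    refine ⟨reweight ι X Y', reweight ι X Z', reweight_nonneg ι hX hY',
      reweight_nonneg ι hX hZ', fun s => ?_, ?_, ?_⟩
    · rw [reweight, reweight, ← add_div, ← mul_add, hsum, ← reweight, reweight_marginal ι hX]
    · exact (hP _ (reweight_nonneg ι hX hY')).2 (by rwa [marginal_reweight ι hY'0])
    · exact (hQ _ (reweight_nonneg ι hX hZ')).2 (by rwa [marginal_reweight ι hZ'0])

lemma exists_extAt_iff_of_marginal {ι : W → V} (hι : Injective ι) (x : W)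
    {X : (V → A) → ℝ} (hX : NonnegTeam X)
    {P : ((V → A) → ℝ) → Prop} {P' : ((W → A) → ℝ) → Prop}
    (hP : ∀ Y, NonnegTeam Y → (P Y ↔ P' (marginal ι Y))) :
    (∃ Y : (V → A) → ℝ, NonnegTeam Y ∧ ExtAt (ι x) X Y ∧ P Y) ↔
      ∃ Y' : (W → A) → ℝ, NonnegTeam Y' ∧ ExtAt x (marginal ι X) Y' ∧ P' Y' := by
  constructor
  · rintro ⟨Y, hY, hext, hPY⟩
    exact ⟨marginal ι Y, marginal_nonneg ι hY, hext.marginal hι, (hP Y hY).1 hPY⟩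
  · rintro ⟨Y', hY', hext, hPY'⟩
    rw [extAt_iff_sumUpdate_eq] at hext
    -- The witness reweights the `ι x`-symmetrisation of `X`, whose marginal is `sumUpdate x Y'`.
    set X' := sumUpdate (ι x) X
    have hX' : marginal ι X' = sumUpdate x Y' := by rw [marginal_sumUpdate hι, hext]
    have hY'0 : ∀ t, marginal ι X' t = 0 → Y' t = 0 := fun t h =>
      le_antisymm ((le_sumUpdate x hY' t).trans_eq ((congrFun hX' t).symm.trans h)) (hY' t)
    have hnn := reweight_nonneg ι (sumUpdate_nonneg (ι x) hX) hY'
    refine ⟨reweight ι X' Y', hnn, ?_, (hP _ hnn).2 (by rwa [marginal_reweight ι hY'0])⟩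
    rw [extAt_iff_sumUpdate_eq, sumUpdate_reweight hι, ← hX',
      reweight_marginal ι (sumUpdate_nonneg (ι x) hX)]

end Marginal

theorem locality_general
    (W V τ : Type) [Fintype W] [DecidableEq W] [Fintype V] [DecidableEq V]
    (arR : τ → ℕ)
    (A : Type) [Fintype A] [DecidableEq A]
    (I : ∀ R : τ, (Fin (arR R) → A) → Prop)
    (ψ : PFormula W τ arR) (hψ : ψ.isFOmarg)
    (ι : W → V) (hι : Function.Injective ι)
    (X : (V → A) → ℝ) (hX : NonnegTeam X) :
    wSat I (ψ.rename ι) X ↔ wSat I ψ (marginal ι X) := by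
  induction ψ generalizing X with
  | eq | neq | rel | nrel =>
    simp only [PFormula.rename, wSat]
    rw [forall_pos_marginal_iff ι hX]
  | marg n xs ys => simp only [PFormula.rename, wSat, margW_marginal]
  | dep => exact hψ.1.elim
  | indep => exact hψ.2.1.elim
  | incl => exact hψ.2.2.elim
  | and φ θ ih₁ ih₂ =>
    obtain ⟨⟨d₁, d₂⟩, ⟨i₁, i₂⟩, c₁, c₂⟩ := hψ
    exact and_congr (ih₁ ⟨d₁, i₁, c₁⟩ X hX) (ih₂ ⟨d₂, i₂, c₂⟩ X hX)
  | or φ θ ih₁ ih₂ =>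
    obtain ⟨⟨d₁, d₂⟩, ⟨i₁, i₂⟩, c₁, c₂⟩ := hψ
    exact exists_split_iff_of_marginal ι hX (ih₁ ⟨d₁, i₁, c₁⟩) (ih₂ ⟨d₂, i₂, c₂⟩)
  | ex x φ ih => exact exists_extAt_iff_of_marginal hι x hX (ih hψ)
  | all x φ ih =>
    simp only [PFormula.rename, wSat]
    rw [← marginal_dup hι]
    exact ih hψ _ (dup_nonneg _ hX)

/-- **Locality.**
For every formula `ψ` of probabilistic inclusion logic FO(≈) whose (free) variables
come from the variable domain `W`, every injection `ι : W → V` of `W` into the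
variable domain `V` of the weighted team `X` (so that `Fr(ψ) ⊆ W ⊆ Dom(X)`):
`𝔄 ⊨ʷ_X ψ` iff `𝔄 ⊨ʷ_{X↾W} ψ`, where `X↾W` is the marginal of `X` on `W`. -/
theorem locality
    (W V τ : Type) [Fintype W] [DecidableEq W] [Fintype V] [DecidableEq V]
    (arR : τ → ℕ)
    (A : Type) [Fintype A] [DecidableEq A] (hA : 2 ≤ Fintype.card A)
    (I : ∀ R : τ, (Fin (arR R) → A) → Prop)
    (ψ : PFormula W τ arR) (hψ : ψ.isFOmarg)
    (ι : W → V) (hι : Function.Injective ι)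
    (X : (V → A) → ℝ) (hX : NonnegTeam X) :
    wSat I (ψ.rename ι) X ↔ wSat I ψ (marginal ι X) :=
  locality_general W V τ arR A I ψ hψ ι hι X hX

end PTS
end
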